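/- arXiv:2310.17489 — 4 statements merged into one kernel-verified Lean document; each statement's English description precedes it below -/
import Mathlib

section
/- Let f_D be the Gaussian density with mean m and variance σ² on ℝ, let ℓ(x,v) = (x−v)², and for α ≥ 1 define ℓ_α(x,v) = α·ℓ(x,v) if x ≥ v and ℓ(x,v) otherwise. Then for all x ∈ ℝ, I(x) := ∫_ℝ ℓ_α(x,v) f_D(v) dv equals (α−1)·σ²·((w²+1)·Φ(w) + w·φ(w)) + σ²·(w²+1), where w = (x−m)/σ, φ is the standard normal density, and Φ is its cumulative distribution function. -/
/-!
Substituting `v = m + σ t` turns the integral into `σ²` times the same integral against the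
standard normal density `φ`, with the loss centred at `w = (x - m) / σ`. There everything follows
from the identity `(w - t)² φ(t) = (w² + 1) φ(t) + d/dt [(2w - t) φ(t)]`: integrating it over `ℝ`
gives `w² + 1`, and over `(-∞, w]` gives `(w² + 1) Φ(w) + w φ(w)`. The asymmetric loss adds
`α - 1` times the latter.
-/

open Real MeasureTheory

noncomputable def stdNormalPdf (t : ℝ) : ℝ :=
  (1 / Real.sqrt (2 * π)) * Real.exp (-(t ^ 2) / 2)

noncomputable def stdNormalCdf (t : ℝ) : ℝ := ∫ s in Set.Iic t, stdNormalPdf s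

open Filter Set Topology Polynomial ProbabilityTheory

lemma stdNormalPdf_eq_gaussianPDFReal : stdNormalPdf = gaussianPDFReal 0 1 := by
  ext t
  simp [stdNormalPdf, gaussianPDFReal, neg_div]

lemma integral_stdNormalPdf : ∫ t, stdNormalPdf t = 1 := by
  rw [stdNormalPdf_eq_gaussianPDFReal]
  exact integral_gaussianPDFReal_eq_one 0 one_ne_zero

lemma integrable_stdNormalPdf : Integrable stdNormalPdf := by
  rw [stdNormalPdf_eq_gaussianPDFReal]
  exact integrable_gaussianPDFReal 0 1

lemma integrable_pow_mul_stdNormalPdf (n : ℕ) :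
    Integrable fun t => t ^ n * stdNormalPdf t := by
  refine ((integrable_rpow_mul_exp_neg_mul_sq (b := 1 / 2) (by norm_num)
    (by linarith [n.cast_nonneg (α := ℝ)] : (-1 : ℝ) < n)).const_mul (1 / √(2 * π))).congr
    (ae_of_all _ fun t => ?_)
  simp only [stdNormalPdf, rpow_natCast]
  ring_nf

lemma integrable_eval_mul_stdNormalPdf (p : ℝ[X]) :
    Integrable fun t => p.eval t * stdNormalPdf t := by
  induction p using Polynomial.induction_on' with
  | add p q hp hq =>
    simp only [eval_add, add_mul]
    exact hp.add hq
  | monomial n a =>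
    simpa only [eval_monomial, mul_assoc] using (integrable_pow_mul_stdNormalPdf n).const_mul a

lemma hasDerivAt_stdNormalPdf (t : ℝ) : HasDerivAt stdNormalPdf (-t * stdNormalPdf t) t := by
  have hexp : HasDerivAt (fun s => -(s ^ 2) / 2) (-t) t := by
    refine ((hasDerivAt_pow 2 t).neg.div_const 2).congr_deriv ?_
    push_cast; ring
  refine (hexp.exp.const_mul (1 / √(2 * π))).congr_deriv ?_
  simp only [stdNormalPdf]; ring

lemma hasDerivAt_two_mul_sub_mul_stdNormalPdf (w t : ℝ) :
    HasDerivAt (fun s => (2 * w - s) * stdNormalPdf s)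
      ((w - t) ^ 2 * stdNormalPdf t - (w ^ 2 + 1) * stdNormalPdf t) t := by
  refine (((hasDerivAt_id t).const_sub (2 * w)).mul (hasDerivAt_stdNormalPdf t)).congr_deriv ?_
  simp only [id_eq]; ring

lemma integrable_sq_sub_mul_stdNormalPdf (w : ℝ) :
    Integrable fun t => (w - t) ^ 2 * stdNormalPdf t := by
  convert integrable_eval_mul_stdNormalPdf ((C w - X) ^ 2) using 3; simp

lemma integrable_deriv_two_mul_sub_mul_stdNormalPdf (w : ℝ) :
    Integrable fun t => (w - t) ^ 2 * stdNormalPdf t - (w ^ 2 + 1) * stdNormalPdf t := by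
  convert integrable_eval_mul_stdNormalPdf ((C w - X) ^ 2 - (C w ^ 2 + 1)) using 2
  simp only [eval_sub, eval_pow, eval_C, eval_X, eval_add, eval_one]
  ring

lemma integrable_two_mul_sub_mul_stdNormalPdf (w : ℝ) :
    Integrable fun t => (2 * w - t) * stdNormalPdf t := by
  convert integrable_eval_mul_stdNormalPdf (C (2 * w) - X) using 3; simp

lemma tendsto_two_mul_sub_mul_stdNormalPdf_atBot (w : ℝ) :
    Tendsto (fun t => (2 * w - t) * stdNormalPdf t) atBot (𝓝 0) :=
  tendsto_zero_of_hasDerivAt_of_integrableOn_Iic (a := 0)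
    (fun t _ => hasDerivAt_two_mul_sub_mul_stdNormalPdf w t)
    (integrable_deriv_two_mul_sub_mul_stdNormalPdf w).integrableOn
    (integrable_two_mul_sub_mul_stdNormalPdf w).integrableOn

lemma tendsto_two_mul_sub_mul_stdNormalPdf_atTop (w : ℝ) :
    Tendsto (fun t => (2 * w - t) * stdNormalPdf t) atTop (𝓝 0) :=
  tendsto_zero_of_hasDerivAt_of_integrableOn_Ioi (a := 0)
    (fun t _ => hasDerivAt_two_mul_sub_mul_stdNormalPdf w t)
    (integrable_deriv_two_mul_sub_mul_stdNormalPdf w).integrableOn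
    (integrable_two_mul_sub_mul_stdNormalPdf w).integrableOn

lemma integral_sq_sub_mul_stdNormalPdf (w : ℝ) :
    ∫ t, (w - t) ^ 2 * stdNormalPdf t = w ^ 2 + 1 := by
  have h := integral_of_hasDerivAt_of_tendsto (hasDerivAt_two_mul_sub_mul_stdNormalPdf w)
    (integrable_deriv_two_mul_sub_mul_stdNormalPdf w)
    (tendsto_two_mul_sub_mul_stdNormalPdf_atBot w) (tendsto_two_mul_sub_mul_stdNormalPdf_atTop w)
  rw [integral_sub (integrable_sq_sub_mul_stdNormalPdf w) (integrable_stdNormalPdf.const_mul _),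
    integral_const_mul, integral_stdNormalPdf] at h
  linarith

lemma setIntegral_Iic_sq_sub_mul_stdNormalPdf (w : ℝ) :
    ∫ t in Iic w, (w - t) ^ 2 * stdNormalPdf t
      = (w ^ 2 + 1) * stdNormalCdf w + w * stdNormalPdf w := by
  have h := integral_Iic_of_hasDerivAt_of_tendsto' (a := w)
    (fun t _ => hasDerivAt_two_mul_sub_mul_stdNormalPdf w t)
    (integrable_deriv_two_mul_sub_mul_stdNormalPdf w).integrableOn
    (tendsto_two_mul_sub_mul_stdNormalPdf_atBot w)
  rw [integral_sub (integrable_sq_sub_mul_stdNormalPdf w).integrableOn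
    (integrable_stdNormalPdf.const_mul _).integrableOn, integral_const_mul] at h
  rw [stdNormalCdf]
  linarith

lemma integral_ite_mul_sq_sub_mul_stdNormalPdf (α w : ℝ) :
    ∫ t, (if t ≤ w then α else 1) * (w - t) ^ 2 * stdNormalPdf t
      = (α - 1) * ((w ^ 2 + 1) * stdNormalCdf w + w * stdNormalPdf w) + (w ^ 2 + 1) := by
  have hsplit : ∀ t, (if t ≤ w then α else 1) * (w - t) ^ 2 * stdNormalPdf t
      = (α - 1) * (Iic w).indicator (fun s => (w - s) ^ 2 * stdNormalPdf s) t
        + (w - t) ^ 2 * stdNormalPdf t := by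
    intro t
    by_cases ht : t ≤ w
    · simp only [ht, ↓reduceIte, mem_Iic, indicator_of_mem]; ring
    · simp [ht]
  have hint := integrable_sq_sub_mul_stdNormalPdf w
  simp_rw [hsplit]
  rw [integral_add ((hint.indicator measurableSet_Iic).const_mul _) hint, integral_const_mul,
    integral_indicator measurableSet_Iic, setIntegral_Iic_sq_sub_mul_stdNormalPdf,
    integral_sq_sub_mul_stdNormalPdf]

lemma integral_comp_mul_add {E : Type*} [NormedAddCommGroup E] [NormedSpace ℝ E]
    (G : ℝ → E) (a b : ℝ) : ∫ t, G (a * t + b) = |a⁻¹| • ∫ v, G v := by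
  rw [Measure.integral_comp_mul_left (fun u => G (u + b)) a, integral_add_right_eq_self G b]

lemma gaussian_density_comp_mul_add {σ : ℝ} (hσ : 0 < σ) (m t : ℝ) :
    1 / √(2 * π * σ ^ 2) * exp (-(σ * t + m - m) ^ 2 / (2 * σ ^ 2)) = stdNormalPdf t / σ := by
  have hsqrt : √(2 * π * σ ^ 2) = √(2 * π) * σ := by
    rw [sqrt_mul (by positivity), sqrt_sq hσ.le]
  have hexp : -(σ * t + m - m) ^ 2 / (2 * σ ^ 2) = -(t ^ 2) / 2 := by
    field_simp; ring
  rw [hsqrt, hexp, stdNormalPdf]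
  field_simp

theorem stmt0_general (m σ : ℝ) (hσ : 0 < σ) (α : ℝ)
    (fD : ℝ → ℝ)
    (hfD : ∀ v, fD v = (1 / Real.sqrt (2 * π * σ ^ 2)) * Real.exp (-(v - m) ^ 2 / (2 * σ ^ 2)))
    (ℓα : ℝ → ℝ → ℝ)
    (hℓ : ∀ x v, ℓα x v = if v ≤ x then α * (x - v) ^ 2 else (x - v) ^ 2)
    (x : ℝ) :
    (∫ v, ℓα x v * fD v) =
      (α - 1) * σ ^ 2 *
          ((((x - m) / σ) ^ 2 + 1) * stdNormalCdf ((x - m) / σ)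
            + ((x - m) / σ) * stdNormalPdf ((x - m) / σ))
        + σ ^ 2 * (((x - m) / σ) ^ 2 + 1) := by
  set w := (x - m) / σ
  have hpoint : ∀ t, ℓα x (σ * t + m) * fD (σ * t + m)
      = σ * ((if t ≤ w then α else 1) * (w - t) ^ 2 * stdNormalPdf t) := by
    intro t
    have hle : σ * t + m ≤ x ↔ t ≤ w := by
      rw [le_div_iff₀ hσ]; constructor <;> intro h <;> linarith
    have hdiff : x - (σ * t + m) = σ * (w - t) := by
      simp only [w]; field_simp; ring
    rw [hℓ, hfD, gaussian_density_comp_mul_add hσ, hdiff]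
    simp only [hle]
    split_ifs <;> field_simp
  have hchange := integral_comp_mul_add (fun v => ℓα x v * fD v) σ m
  simp only [hpoint, integral_const_mul, integral_ite_mul_sq_sub_mul_stdNormalPdf,
    abs_of_pos (inv_pos.2 hσ), smul_eq_mul] at hchange
  rw [eq_inv_mul_iff_mul_eq₀ hσ.ne'] at hchange
  rw [← hchange]
  ring

theorem stmt0 (m σ : ℝ) (hσ : 0 < σ) (α : ℝ) (hα : 1 ≤ α)
    (fD : ℝ → ℝ)
    (hfD : ∀ v, fD v = (1 / Real.sqrt (2 * π * σ ^ 2)) * Real.exp (-(v - m) ^ 2 / (2 * σ ^ 2)))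
    (ℓα : ℝ → ℝ → ℝ)
    (hℓ : ∀ x v, ℓα x v = if v ≤ x then α * (x - v) ^ 2 else (x - v) ^ 2)
    (x : ℝ) :
    (∫ v, ℓα x v * fD v) =
      (α - 1) * σ ^ 2 *
          ((((x - m) / σ) ^ 2 + 1) * stdNormalCdf ((x - m) / σ)
            + ((x - m) / σ) * stdNormalPdf ((x - m) / σ))
        + σ ^ 2 * (((x - m) / σ) ^ 2 + 1) :=
  stmt0_general m σ hσ α fD hfD ℓα hℓ x
end

section
/- Let f_D be the Laplace density f_D(v) = (1/(2b))·e^{−|v−a|/b} on ℝ with a ∈ ℝ, b > 0, let ℓ(x,v) = |x−a| − |v−a|, and for α ≥ 1 define ℓ_α(x,v) = α·ℓ(x,v) if x ≥ v and ℓ(x,v) otherwise. Then I(x) := ∫_ℝ ℓ_α(x,v) f_D(v) dv equals α·b·(w−1) + b·((α−1)/2)·e^{−w} when x ≥ a, and −b·(w+1) + b·((1−α)/2)·e^{w} when x < a, where w = (x−a)/b. -/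
/-!
The substitution `v = a + b * u` turns `ℓα x v * fD v` into `asymLoss α w u * exp (-|u|) / 2`
with `w = (x - a) / b`, so only the standard Laplace density has to be treated. Splitting the
line at `u = w`, the integral of `asymLoss α w u * exp (-|u|)` is `α * A + B`, where `A` and `B`
are the integrals of `(|w| - |u|) * exp (-|u|)` over `u ≤ w` and `u > w`. Their sum is
`2 * (|w| - 1)`, and the piece not containing `0` is an elementary integral of
`(p + q * u) * exp (-u)` over a half-line (after the reflection `u ↦ -u` when `w < 0`).
-/

open Real MeasureTheory Filter Set

theorem integrableOn_Ioi_mul_exp_neg (r : ℝ) :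
    IntegrableOn (fun u => u * exp (-u)) (Ioi r) := by
  have h0 : IntegrableOn (fun u => u * exp (-u)) (Ioi 0) := by
    have := GammaIntegral_convergent (s := 2) two_pos
    norm_num at this
    simpa [mul_comm] using this
  have hc : Continuous fun u : ℝ => u * exp (-u) := by fun_prop
  exact (hc.integrableOn_Icc.union h0).mono_set fun u hu =>
    (le_or_gt u 0).imp (fun h => ⟨(mem_Ioi.mp hu).le, h⟩) id

theorem integrableOn_Ioi_linear_mul_exp_neg (p q r : ℝ) :
    IntegrableOn (fun u => (p + q * u) * exp (-u)) (Ioi r) := by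
  refine IntegrableOn.congr_fun (((integrableOn_exp_neg_Ioi r).const_mul p).add
    ((integrableOn_Ioi_mul_exp_neg r).const_mul q)) (fun u _ => ?_) measurableSet_Ioi
  simp only [Pi.add_apply]
  ring

theorem integral_Ioi_linear_mul_exp_neg (p q r : ℝ) :
    ∫ u in Ioi r, (p + q * u) * exp (-u) = (p + q * (r + 1)) * exp (-r) := by
  have hderiv (u : ℝ) :
      HasDerivAt (fun u => -(p + q * (u + 1)) * exp (-u)) ((p + q * u) * exp (-u)) u := by
    refine (((((hasDerivAt_id u).add_const 1).const_mul q).const_add p).fun_neg.fun_mul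
      (hasDerivAt_neg u).exp).congr_deriv ?_
    simp only [id]
    ring
  have hlim : Tendsto (fun u => -(p + q * (u + 1)) * exp (-u)) atTop (nhds 0) := by
    have h := ((tendsto_exp_neg_atTop_nhds_zero).const_mul (-(p + q))).add
      ((tendsto_pow_mul_exp_neg_atTop_nhds_zero 1).const_mul (-q))
    simp only [mul_zero, add_zero] at h
    exact h.congr fun u => by ring
  rw [integral_Ioi_of_hasDerivAt_of_tendsto' (fun u _ => hderiv u)
    (integrableOn_Ioi_linear_mul_exp_neg p q r) hlim]
  ring

theorem IntegrableOn.integrable_comp_abs {f : ℝ → ℝ} (hf : IntegrableOn f (Ioi 0)) :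
    Integrable fun u => f |u| := by
  have hpos : IntegrableOn (fun u => f |u|) (Ici 0) :=
    (integrableOn_Ici_iff_integrableOn_Ioi).mpr <|
      hf.congr_fun (fun u hu => by rw [abs_of_pos hu]) measurableSet_Ioi
  have hneg : IntegrableOn (fun u => f |u|) (Iic 0) := by
    simpa using hpos.comp_neg
  simpa using hneg.union hpos

theorem integral_comp_add_mul_left {E : Type*} [NormedAddCommGroup E] [NormedSpace ℝ E]
    (f : ℝ → E) (a b : ℝ) : ∫ u, f (a + b * u) = |b⁻¹| • ∫ v, f v := by
  rw [Measure.integral_comp_mul_left (fun u => f (a + u)) b, integral_add_left_eq_self]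

theorem integrable_sub_abs_mul_exp_neg_abs (w : ℝ) :
    Integrable fun u => (|w| - |u|) * exp (-|u|) :=
  IntegrableOn.integrable_comp_abs (f := fun t => (|w| - t) * exp (-t)) <| by
    simpa [sub_eq_add_neg] using integrableOn_Ioi_linear_mul_exp_neg |w| (-1) 0

theorem integral_sub_abs_mul_exp_neg_abs (w : ℝ) :
    ∫ u, (|w| - |u|) * exp (-|u|) = 2 * (|w| - 1) := by
  rw [integral_comp_abs (f := fun t => (|w| - t) * exp (-t))]
  simpa [sub_eq_add_neg] using integral_Ioi_linear_mul_exp_neg |w| (-1) 0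

theorem setIntegral_Ioi_sub_abs_mul_exp_neg_abs {w : ℝ} (hw : 0 ≤ w) :
    ∫ u in Ioi w, (|w| - |u|) * exp (-|u|) = -exp (-w) := by
  rw [setIntegral_congr_fun measurableSet_Ioi (g := fun u => (w + -1 * u) * exp (-u))
    fun u hu => by simp only [abs_of_nonneg hw, abs_of_pos (hw.trans_lt hu)]; ring,
    integral_Ioi_linear_mul_exp_neg]
  ring

theorem setIntegral_Iic_sub_abs_mul_exp_neg_abs {w : ℝ} (hw : w ≤ 0) :
    ∫ u in Iic w, (|w| - |u|) * exp (-|u|) = -exp w := by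
  have h := setIntegral_Ioi_sub_abs_mul_exp_neg_abs (neg_nonneg.mpr hw)
  rw [← integral_comp_neg_Iic, neg_neg] at h
  simpa only [abs_neg] using h

noncomputable def asymLoss (α w u : ℝ) : ℝ :=
  if u ≤ w then α * (|w| - |u|) else |w| - |u|

theorem integral_asymLoss_mul_exp_neg_abs (α w : ℝ) :
    ∫ u, asymLoss α w u * exp (-|u|) =
      if 0 ≤ w then 2 * α * (w - 1) + (α - 1) * exp (-w)
      else -2 * (w + 1) + (1 - α) * exp w := by
  set h := fun u => (|w| - |u|) * exp (-|u|)
  have hh : Integrable h := integrable_sub_abs_mul_exp_neg_abs w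
  have hIic : EqOn (fun u => asymLoss α w u * exp (-|u|)) (fun u => α * h u) (Iic w) :=
    fun u hu => by simp only [asymLoss, if_pos (mem_Iic.mp hu), h]; ring
  have hIoi : EqOn (fun u => asymLoss α w u * exp (-|u|)) h (Ioi w) :=
    fun u hu => by simp only [asymLoss, if_neg (not_le.mpr (mem_Ioi.mp hu)), h]
  have hsplit := intervalIntegral.integral_Iic_add_Ioi (b := w) hh.integrableOn hh.integrableOn
  rw [integral_sub_abs_mul_exp_neg_abs] at hsplit
  rw [← intervalIntegral.integral_Iic_add_Ioi
      (((hh.const_mul α).integrableOn).congr_fun hIic.symm measurableSet_Iic)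
      (hh.integrableOn.congr_fun hIoi.symm measurableSet_Ioi),
    setIntegral_congr_fun measurableSet_Iic hIic, setIntegral_congr_fun measurableSet_Ioi hIoi,
    integral_const_mul]
  split_ifs with hw
  · rw [abs_of_nonneg hw] at hsplit
    rw [setIntegral_Ioi_sub_abs_mul_exp_neg_abs hw] at hsplit ⊢
    linear_combination α * hsplit
  · rw [abs_of_neg (not_le.mp hw)] at hsplit
    rw [setIntegral_Iic_sub_abs_mul_exp_neg_abs (le_of_not_ge hw)] at hsplit ⊢
    linear_combination hsplit

theorem stmt5_general (a b : ℝ) (hb : 0 < b) (α : ℝ)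
    (fD : ℝ → ℝ) (hfD : ∀ v, fD v = (1 / (2 * b)) * Real.exp (-|v - a| / b))
    (ℓα : ℝ → ℝ → ℝ)
    (hℓ : ∀ x v, ℓα x v = if v ≤ x then α * (|x - a| - |v - a|) else |x - a| - |v - a|)
    (x : ℝ) :
    (∫ v, ℓα x v * fD v) =
      if a ≤ x then
        α * b * ((x - a) / b - 1) + b * ((α - 1) / 2) * Real.exp (-((x - a) / b))
      else
        -b * ((x - a) / b + 1) + b * ((1 - α) / 2) * Real.exp ((x - a) / b) := by
  set w := (x - a) / b with hw
  have hxa : x - a = b * w := by rw [hw]; field_simp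
  have hstd (u : ℝ) : ℓα x (a + b * u) * fD (a + b * u) = asymLoss α w u * exp (-|u|) / 2 := by
    have hle : a + b * u ≤ x ↔ u ≤ w := by
      rw [← sub_nonneg, show x - (a + b * u) = b * (w - u) by linarith,
        mul_nonneg_iff_of_pos_left hb, sub_nonneg]
    rw [hℓ, hfD, add_sub_cancel_left, hxa, abs_mul, abs_mul, abs_of_pos hb, asymLoss]
    simp only [hle]
    split_ifs <;> field_simp
  have hcov := integral_comp_add_mul_left (fun v => ℓα x v * fD v) a b
  rw [smul_eq_mul, abs_inv, abs_of_pos hb, eq_inv_mul_iff_mul_eq₀ hb.ne'] at hcov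
  simp only [hstd, integral_div, integral_asymLoss_mul_exp_neg_abs] at hcov
  have haw : a ≤ x ↔ 0 ≤ w := by rw [← sub_nonneg, hxa, mul_nonneg_iff_of_pos_left hb]
  rw [← hcov]
  simp only [haw]
  split_ifs <;> ring

theorem stmt5 (a b : ℝ) (hb : 0 < b) (α : ℝ) (hα : 1 ≤ α)
    (fD : ℝ → ℝ) (hfD : ∀ v, fD v = (1 / (2 * b)) * Real.exp (-|v - a| / b))
    (ℓα : ℝ → ℝ → ℝ)
    (hℓ : ∀ x v, ℓα x v = if v ≤ x then α * (|x - a| - |v - a|) else |x - a| - |v - a|)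
    (x : ℝ) :
    (∫ v, ℓα x v * fD v) =
      if a ≤ x then
        α * b * ((x - a) / b - 1) + b * ((α - 1) / 2) * Real.exp (-((x - a) / b))
      else
        -b * ((x - a) / b + 1) + b * ((1 - α) / 2) * Real.exp ((x - a) / b) :=
  stmt5_general a b hb α fD hfD ℓα hℓ x
end

section
/- Let f_D be a probability density on an interval Ω ⊆ ℝ and suppose the loss ℓ(x,v) is, for each fixed v, a strictly increasing function of x on all of Ω with ℓ(x,x) = 0 (a 'TypeN' loss, e.g. ℓ(x,v) = ln x − ln v or x − v). Then I^R(x) := ∫_{Ω ∩ [x,∞)} ℓ(x,v) f_D(v) dv is an increasing function of x, and I^R(x₁) < I^R(x₂) whenever x₁ < x₂ and f_D assigns positive mass to (x₁, x₂) or to [x₂,∞). -/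
open MeasureTheory Set

/-! For `x₁ < x₂` the increment splits as
`I^R(x₂) - I^R(x₁) = ∫_{Ω ∩ [x₂,∞)} (ℓ(x₂,v) - ℓ(x₁,v)) f_D(v) dv`
`                  + ∫_{Ω ∩ (x₁,x₂)} (-ℓ(x₁,v)) f_D(v) dv`
(the point `v = x₁` is null). Both weights are positive on their domains, the second because
`ℓ(x₁,v) < ℓ(v,v) = 0` for `v > x₁`; so each term is nonnegative, and positive as soon as its
domain carries positive `f_D`-mass. -/

theorem integral_mul_pos_of_integral_pos {α : Type*} [MeasurableSpace α] {μ : Measure α}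
    {φ f : α → ℝ} (hφ : ∀ᵐ x ∂μ, 0 < φ x) (hf : 0 ≤ᵐ[μ] f)
    (hφf : Integrable (fun x => φ x * f x) μ) (hpos : 0 < ∫ x, f x ∂μ) :
    0 < ∫ x, φ x * f x ∂μ := by
  have hnonneg : 0 ≤ᵐ[μ] fun x => φ x * f x := by
    filter_upwards [hφ, hf] with x hφx hfx using mul_nonneg hφx.le hfx
  refine (integral_nonneg_of_ae hnonneg).lt_of_ne fun h0 => hpos.ne' ?_
  have hzero := (integral_eq_zero_iff_of_nonneg_ae hnonneg hφf).1 h0.symm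
  refine integral_eq_zero_of_ae ?_
  filter_upwards [hzero, hφ] with x hx hφx using (mul_eq_zero.1 hx).resolve_left hφx.ne'

theorem setIntegral_inter_Ici_eq_add {s : Set ℝ} (hs : MeasurableSet s) {g : ℝ → ℝ}
    {a b : ℝ} (hab : a < b) (hg : IntegrableOn g (s ∩ Ici a)) :
    ∫ v in s ∩ Ici a, g v = (∫ v in s ∩ Ioo a b, g v) + ∫ v in s ∩ Ici b, g v := by
  have hae : (s ∩ Ici a : Set ℝ) =ᵐ[volume] (s ∩ Ioi a : Set ℝ) :=
    (Filter.EventuallyEq.refl _ s).inter Ioi_ae_eq_Ici.symm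
  have hdisj : Disjoint (s ∩ Ioo a b) (s ∩ Ici b) :=
    (Iio_disjoint_Ici le_rfl).mono (inter_subset_right.trans Ioo_subset_Iio_self)
      inter_subset_right
  rw [setIntegral_congr_set hae, ← Ioo_union_Ici_eq_Ioi hab, inter_union_distrib_left,
    setIntegral_union hdisj (hs.inter measurableSet_Ici)
      (hg.mono_set (inter_subset_inter_right _ (Ioo_subset_Ioi_self.trans Ioi_subset_Ici_self)))
      (hg.mono_set (inter_subset_inter_right _ (Ici_subset_Ici.2 hab.le)))]

noncomputable def underestimationIntegral (Ω : Set ℝ) (fD : ℝ → ℝ) (ℓ : ℝ → ℝ → ℝ) (x : ℝ) :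
    ℝ :=
  ∫ v in Ω ∩ Ici x, ℓ x v * fD v

section underestimationIntegral

variable {Ω : Set ℝ} {fD : ℝ → ℝ} {ℓ : ℝ → ℝ → ℝ} {x₁ x₂ : ℝ}

theorem underestimationIntegral_sub (hΩ : MeasurableSet Ω) (h : x₁ < x₂)
    (h₁ : IntegrableOn (fun v => ℓ x₁ v * fD v) (Ω ∩ Ici x₁))
    (h₂ : IntegrableOn (fun v => ℓ x₂ v * fD v) (Ω ∩ Ici x₂)) :
    underestimationIntegral Ω fD ℓ x₂ - underestimationIntegral Ω fD ℓ x₁ =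
      (∫ v in Ω ∩ Ici x₂, (ℓ x₂ v - ℓ x₁ v) * fD v) +
        ∫ v in Ω ∩ Ioo x₁ x₂, -ℓ x₁ v * fD v := by
  rw [underestimationIntegral, underestimationIntegral, setIntegral_inter_Ici_eq_add hΩ h h₁]
  simp_rw [neg_mul, sub_mul]
  rw [integral_neg,
    integral_sub h₂ (h₁.mono_set (inter_subset_inter_right _ (Ici_subset_Ici.2 h.le)))]
  ring

theorem underestimationIntegral_le_and_lt (hΩ : MeasurableSet Ω) (hfD0 : ∀ v, 0 ≤ fD v)
    (hℓ0 : ∀ x, ℓ x x = 0) (hℓmono : ∀ v, StrictMono (ℓ · v)) (h : x₁ < x₂)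
    (h₁ : IntegrableOn (fun v => ℓ x₁ v * fD v) (Ω ∩ Ici x₁))
    (h₂ : IntegrableOn (fun v => ℓ x₂ v * fD v) (Ω ∩ Ici x₂)) :
    underestimationIntegral Ω fD ℓ x₁ ≤ underestimationIntegral Ω fD ℓ x₂ ∧
      ((0 < ∫ v in Ω ∩ Ioo x₁ x₂, fD v) ∨ (0 < ∫ v in Ω ∩ Ici x₂, fD v) →
        underestimationIntegral Ω fD ℓ x₁ < underestimationIntegral Ω fD ℓ x₂) := by
  have hfar_pos : ∀ v ∈ Ω ∩ Ici x₂, 0 < ℓ x₂ v - ℓ x₁ v :=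
    fun v _ => sub_pos.2 (hℓmono v h)
  have hnear_pos : ∀ v ∈ Ω ∩ Ioo x₁ x₂, 0 < -ℓ x₁ v :=
    fun v hv => neg_pos.2 (hℓ0 v ▸ hℓmono v hv.2.1)
  have hfar_int : IntegrableOn (fun v => (ℓ x₂ v - ℓ x₁ v) * fD v) (Ω ∩ Ici x₂) := by
    simpa only [sub_mul, Pi.sub_def] using
      h₂.sub (h₁.mono_set (inter_subset_inter_right _ (Ici_subset_Ici.2 h.le)))
  have hnear_int : IntegrableOn (fun v => -ℓ x₁ v * fD v) (Ω ∩ Ioo x₁ x₂) := by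
    simpa only [neg_mul, Pi.neg_def] using
      h₁.neg.mono_set (inter_subset_inter_right _ (Ioo_subset_Ioi_self.trans Ioi_subset_Ici_self))
  have hfar_nonneg : 0 ≤ ∫ v in Ω ∩ Ici x₂, (ℓ x₂ v - ℓ x₁ v) * fD v :=
    setIntegral_nonneg (hΩ.inter measurableSet_Ici)
      fun v hv => mul_nonneg (hfar_pos v hv).le (hfD0 v)
  have hnear_nonneg : 0 ≤ ∫ v in Ω ∩ Ioo x₁ x₂, -ℓ x₁ v * fD v :=
    setIntegral_nonneg (hΩ.inter measurableSet_Ioo)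
      fun v hv => mul_nonneg (hnear_pos v hv).le (hfD0 v)
  have hgap := underestimationIntegral_sub hΩ h h₁ h₂
  refine ⟨by linarith, ?_⟩
  rintro (hmass | hmass)
  · linarith [integral_mul_pos_of_integral_pos
      (ae_restrict_of_forall_mem (hΩ.inter measurableSet_Ioo) hnear_pos) (ae_of_all _ hfD0)
      hnear_int hmass]
  · linarith [integral_mul_pos_of_integral_pos
      (ae_restrict_of_forall_mem (hΩ.inter measurableSet_Ici) hfar_pos) (ae_of_all _ hfD0)
      hfar_int hmass]

end underestimationIntegral

theorem stmt12_general (Ω : Set ℝ) (hΩ : Ω.OrdConnected)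
    (fD : ℝ → ℝ) (hfD0 : ∀ v, 0 ≤ fD v)
    (ℓ : ℝ → ℝ → ℝ) (hℓ0 : ∀ x, ℓ x x = 0)
    (hℓmono : ∀ v x₁ x₂, x₁ < x₂ → ℓ x₁ v < ℓ x₂ v)
    (IR : ℝ → ℝ) (hIR : ∀ x, IR x = ∫ v in Ω ∩ Set.Ici x, ℓ x v * fD v)
    (hint : ∀ x, IntegrableOn (fun v => ℓ x v * fD v) (Ω ∩ Set.Ici x)) :
    MonotoneOn IR Ω ∧
    ∀ x₁ ∈ Ω, ∀ x₂ ∈ Ω, x₁ < x₂ →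
      (0 < ∫ v in Ω ∩ Set.Ioo x₁ x₂, fD v) ∨ (0 < ∫ v in Ω ∩ Set.Ici x₂, fD v) →
      IR x₁ < IR x₂ := by
  obtain rfl : IR = underestimationIntegral Ω fD ℓ := funext hIR
  have key : ∀ {x₁ x₂}, x₁ < x₂ → _ := fun h =>
    underestimationIntegral_le_and_lt hΩ.measurableSet hfD0 hℓ0
      (fun v _ _ hx => hℓmono v _ _ hx) h (hint _) (hint _)
  refine ⟨fun x₁ _ x₂ _ hle => ?_, fun x₁ _ x₂ _ h => (key h).2⟩
  rcases hle.eq_or_lt with rfl | h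
  · rfl
  · exact (key h).1

theorem stmt12 (Ω : Set ℝ) (hΩ : Ω.OrdConnected)
    (fD : ℝ → ℝ) (hfD0 : ∀ v, 0 ≤ fD v) (hfD1 : ∫ v in Ω, fD v = 1)
    (ℓ : ℝ → ℝ → ℝ) (hℓ0 : ∀ x, ℓ x x = 0)
    (hℓmono : ∀ v x₁ x₂, x₁ < x₂ → ℓ x₁ v < ℓ x₂ v)
    (IR : ℝ → ℝ) (hIR : ∀ x, IR x = ∫ v in Ω ∩ Set.Ici x, ℓ x v * fD v)
    (hint : ∀ x, IntegrableOn (fun v => ℓ x v * fD v) (Ω ∩ Set.Ici x)) :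
    MonotoneOn IR Ω ∧
    ∀ x₁ ∈ Ω, ∀ x₂ ∈ Ω, x₁ < x₂ →
      (0 < ∫ v in Ω ∩ Set.Ioo x₁ x₂, fD v) ∨ (0 < ∫ v in Ω ∩ Set.Ici x₂, fD v) →
      IR x₁ < IR x₂ :=
  stmt12_general Ω hΩ fD hfD0 ℓ hℓ0 hℓmono IR hIR hint
end

section
/- Let v ∈ ℝ, γ > 0, α ≥ 1, and consider the density f(x) = K·e^{−(x−v)²/γ} for x ≤ v and f(x) = K·e^{−α(x−v)²/γ} for x > v, where K is the normalizing constant making ∫_ℝ f = 1. Then K = 2√α / (√(πγ)·(1+√α)), and the mean of f equals v − √(γ/π)·(√α − 1)/√α. -/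
/-!
Substituting `t = x - v`, the density is `K` times a two-piece Gaussian kernel with precision
`1/γ` on the left half-line and `α/γ` on the right. A Gaussian half with precision `c`
contributes `√(π/c)/2` to the mass and `±1/(2c)` to the first moment, so the mass is
`K √(πγ) (1 + 1/√α)/2` and the mean is `v + K (γ/(2α) - γ/2)`; normalising the mass gives `K`.
-/

open Real MeasureTheory Set

lemma integral_Ioi_mul_exp_neg_mul_sq {b : ℝ} (hb : 0 < b) :
    ∫ x in Ioi (0 : ℝ), x * exp (-b * x ^ 2) = (2 * b)⁻¹ := by
  have h := integral_rpow_mul_exp_neg_mul_rpow two_pos (by norm_num : (-1 : ℝ) < 1) hb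
  simp only [rpow_one, rpow_two] at h
  rw [h]
  norm_num [rpow_neg_one]

lemma integral_Iic_exp_neg_mul_sq (b : ℝ) :
    ∫ x in Iic (0 : ℝ), exp (-b * x ^ 2) = √(π / b) / 2 := by
  have h := integral_comp_neg_Iic 0 (fun x => exp (-b * x ^ 2))
  rw [neg_zero, integral_gaussian_Ioi] at h
  simpa only [neg_sq] using h

lemma integral_Iic_mul_exp_neg_mul_sq {b : ℝ} (hb : 0 < b) :
    ∫ x in Iic (0 : ℝ), x * exp (-b * x ^ 2) = -(2 * b)⁻¹ := by
  have h := integral_comp_neg_Iic 0 (fun x => x * exp (-b * x ^ 2))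
  rw [neg_zero, integral_Ioi_mul_exp_neg_mul_sq hb] at h
  simp only [neg_sq, neg_mul, integral_neg] at h ⊢
  linarith

section Piecewise

variable {p q : ℝ → ℝ} {c : ℝ}

lemma ite_le_eq_piecewise [DecidablePred (· ∈ Iic c)] :
    (fun x => if x ≤ c then p x else q x) = (Iic c).piecewise p q := by
  ext x; simp [Set.piecewise]

lemma integrable_ite_le (hp : IntegrableOn p (Iic c)) (hq : IntegrableOn q (Ioi c)) :
    Integrable fun x => if x ≤ c then p x else q x := by
  classical
  rw [ite_le_eq_piecewise]
  exact Integrable.piecewise measurableSet_Iic hp (by rwa [compl_Iic])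

lemma integral_ite_le (hp : IntegrableOn p (Iic c)) (hq : IntegrableOn q (Ioi c)) :
    ∫ x, (if x ≤ c then p x else q x) = (∫ x in Iic c, p x) + ∫ x in Ioi c, q x := by
  classical
  rw [ite_le_eq_piecewise, integral_piecewise measurableSet_Iic hp (by rwa [compl_Iic]), compl_Iic]

end Piecewise

lemma integral_mul_comp_sub_right {g : ℝ → ℝ} (hg : Integrable g)
    (hxg : Integrable fun x => x * g x) (v : ℝ) :
    ∫ x, x * g (x - v) = (∫ x, x * g x) + v * ∫ x, g x := calc
  ∫ x, x * g (x - v) = ∫ x, (fun t => t * g t + v * g t) (x - v) := by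
    congr 1; funext x; ring
  _ = ∫ t, (t * g t + v * g t) := integral_sub_right_eq_self (fun t => t * g t + v * g t) v
  _ = (∫ x, x * g x) + v * ∫ x, g x := by rw [integral_add hxg (hg.const_mul v), integral_const_mul]

noncomputable def splitGaussian (a b x : ℝ) : ℝ :=
  if x ≤ 0 then exp (-a * x ^ 2) else exp (-b * x ^ 2)

section SplitGaussian

variable {a b : ℝ}

lemma integrable_splitGaussian (ha : 0 < a) (hb : 0 < b) : Integrable (splitGaussian a b) :=
  integrable_ite_le (integrable_exp_neg_mul_sq ha).integrableOn
    (integrable_exp_neg_mul_sq hb).integrableOn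

lemma integral_splitGaussian (ha : 0 < a) (hb : 0 < b) :
    ∫ x, splitGaussian a b x = (√(π / a) + √(π / b)) / 2 := by
  unfold splitGaussian
  rw [integral_ite_le (integrable_exp_neg_mul_sq ha).integrableOn
    (integrable_exp_neg_mul_sq hb).integrableOn, integral_Iic_exp_neg_mul_sq,
    integral_gaussian_Ioi]
  ring

lemma mul_splitGaussian_eq_ite :
    (fun x => x * splitGaussian a b x) =
      fun x => if x ≤ 0 then x * exp (-a * x ^ 2) else x * exp (-b * x ^ 2) := by
  simp only [splitGaussian, mul_ite]

lemma integrable_mul_splitGaussian (ha : 0 < a) (hb : 0 < b) :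
    Integrable fun x => x * splitGaussian a b x := by
  rw [mul_splitGaussian_eq_ite]
  exact integrable_ite_le (integrable_mul_exp_neg_mul_sq ha).integrableOn
    (integrable_mul_exp_neg_mul_sq hb).integrableOn

lemma integral_mul_splitGaussian (ha : 0 < a) (hb : 0 < b) :
    ∫ x, x * splitGaussian a b x = (2 * b)⁻¹ - (2 * a)⁻¹ := by
  rw [mul_splitGaussian_eq_ite, integral_ite_le (integrable_mul_exp_neg_mul_sq ha).integrableOn
    (integrable_mul_exp_neg_mul_sq hb).integrableOn, integral_Iic_mul_exp_neg_mul_sq ha,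
    integral_Ioi_mul_exp_neg_mul_sq hb]
  ring

lemma integral_const_mul_splitGaussian_sub (ha : 0 < a) (hb : 0 < b) (K v : ℝ) :
    ∫ x, K * splitGaussian a b (x - v) = K * ((√(π / a) + √(π / b)) / 2) := by
  rw [integral_const_mul, integral_sub_right_eq_self (splitGaussian a b),
    integral_splitGaussian ha hb]

lemma integral_mul_const_mul_splitGaussian_sub (ha : 0 < a) (hb : 0 < b) (K v : ℝ) :
    ∫ x, x * (K * splitGaussian a b (x - v)) =
      K * ((2 * b)⁻¹ - (2 * a)⁻¹ + v * ((√(π / a) + √(π / b)) / 2)) := by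
  simp_rw [mul_left_comm _ K]
  rw [integral_const_mul, integral_mul_comp_sub_right (integrable_splitGaussian ha hb)
    (integrable_mul_splitGaussian ha hb), integral_mul_splitGaussian ha hb,
    integral_splitGaussian ha hb]

end SplitGaussian

theorem stmt13 (v γ α : ℝ) (hγ : 0 < γ) (hα : 1 ≤ α)
    (K : ℝ) (f : ℝ → ℝ)
    (hf : ∀ x, f x = if x ≤ v then K * Real.exp (-(x - v) ^ 2 / γ)
                     else K * Real.exp (-α * (x - v) ^ 2 / γ))
    (hK : ∫ x, f x = 1) :
    K = 2 * Real.sqrt α / (Real.sqrt (π * γ) * (1 + Real.sqrt α)) ∧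
    (∫ x, x * f x) = v - Real.sqrt (γ / π) * (Real.sqrt α - 1) / Real.sqrt α := by
  have hα₀ : 0 < α := one_pos.trans_le hα
  have ha : 0 < γ⁻¹ := inv_pos.mpr hγ
  have hb : 0 < α / γ := div_pos hα₀ hγ
  have hf' : f = fun x => K * splitGaussian γ⁻¹ (α / γ) (x - v) := by
    funext x
    simp only [hf, splitGaussian, sub_nonpos]
    split_ifs <;> ring_nf
  have hmass : (√(π / γ⁻¹) + √(π / (α / γ))) / 2 = √π * √γ * (1 + √α) / (2 * √α) := by
    rw [div_inv_eq_mul, div_div_eq_mul_div, sqrt_div (by positivity), sqrt_mul pi_pos.le]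
    field_simp
    ring
  rw [hf', integral_const_mul_splitGaussian_sub ha hb, hmass] at hK
  have hKval : K = 2 * √α / (√(π * γ) * (1 + √α)) := by
    rw [sqrt_mul pi_pos.le]
    field_simp at hK ⊢
    linarith
  refine ⟨hKval, ?_⟩
  rw [hf', integral_mul_const_mul_splitGaussian_sub ha hb, hmass, hKval, sqrt_div hγ.le,
    sqrt_mul pi_pos.le]
  have hπ : 0 < √π := sqrt_pos.mpr pi_pos
  field_simp
  linear_combination γ * sq_sqrt hα₀.le + (√α ^ 2 - 1) * α * sq_sqrt hγ.le
end
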